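/- arXiv:1308.0933 — 5 statements merged into one kernel-verified Lean document; each statement's English description precedes it below -/
import Mathlib

section
/- Let J ≥ 1 and let (π_0, …, π_J) be a probability vector with π_i > 0 for all i and π_J < 1, and let P_i = Σ_{j=0}^i π_j. Then D(π) := 1 − 2 (π_J/(1−π_J)) Σ_{i=0}^J P_i (1 − π_J P_i/π_i) satisfies D(π) ≥ (1/2 − π_J)/(1 − π_J). -/
/-!
Each summand `P_i (1 - π_J P_i / π_i)` is a concave quadratic in `P_i` whose maximum is
`π_i / (4 π_J)`. Summing gives `Σ ≤ 1 / (4 π_J)`, hence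
`D(π) ≥ 1 - 1 / (2 (1 - π_J)) = (1/2 - π_J) / (1 - π_J)`.
-/

open Finset

lemma mul_one_sub_mul_div_le {q p : ℝ} (hq : 0 < q) (hp : 0 < p) (x : ℝ) :
    x * (1 - q * x / p) ≤ p / (4 * q) := by
  have completed_square :
      x * (1 - q * x / p) = p / (4 * q) - (p - 2 * q * x) ^ 2 / (4 * q * p) := by
    field_simp
    ring
  rw [completed_square, sub_le_self_iff]
  positivity

lemma sum_mul_one_sub_mul_div_le {ι : Type*} (s : Finset ι) {q : ℝ} (hq : 0 < q)
    {p : ι → ℝ} (hp : ∀ i ∈ s, 0 < p i) (x : ι → ℝ) :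
    ∑ i ∈ s, x i * (1 - q * x i / p i) ≤ (∑ i ∈ s, p i) / (4 * q) := by
  rw [sum_div]
  exact sum_le_sum fun i hi => mul_one_sub_mul_div_le hq (hp i hi) (x i)

theorem D_lower_bound_general (J : ℕ) (p : ℕ → ℝ)
    (hpos : ∀ i ≤ J, 0 < p i)
    (hsum : ∑ i ∈ Finset.range (J + 1), p i = 1)
    (hJlt : p J < 1) :
    1 - 2 * (p J / (1 - p J)) *
        ∑ i ∈ Finset.range (J + 1),
          (∑ j ∈ Finset.range (i + 1), p j) *
            (1 - p J * (∑ j ∈ Finset.range (i + 1), p j) / p i)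
      ≥ (1 / 2 - p J) / (1 - p J) := by
  have hq : 0 < p J := hpos J le_rfl
  have h1q : 0 < 1 - p J := sub_pos.mpr hJlt
  have hS := sum_mul_one_sub_mul_div_le (range (J + 1)) hq
    (fun i hi => hpos i (Nat.lt_succ_iff.mp (mem_range.mp hi)))
    (fun i => ∑ j ∈ range (i + 1), p j)
  set S := ∑ i ∈ range (J + 1), (∑ j ∈ range (i + 1), p j) *
      (1 - p J * (∑ j ∈ range (i + 1), p j) / p i)
  rw [hsum, le_div_iff₀ (by positivity)] at hS
  have gap : 1 - 2 * (p J / (1 - p J)) * S - (1 / 2 - p J) / (1 - p J)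
      = (1 - 4 * p J * S) / (2 * (1 - p J)) := by
    field_simp
    ring
  have gap_nonneg : 0 ≤ (1 - 4 * p J * S) / (2 * (1 - p J)) := by
    apply div_nonneg <;> linarith
  linarith

theorem D_lower_bound (J : ℕ) (hJ : 1 ≤ J) (p : ℕ → ℝ)
    (hpos : ∀ i ≤ J, 0 < p i)
    (hsum : ∑ i ∈ Finset.range (J + 1), p i = 1)
    (hJlt : p J < 1) :
    1 - 2 * (p J / (1 - p J)) *
        ∑ i ∈ Finset.range (J + 1),
          (∑ j ∈ Finset.range (i + 1), p j) *
            (1 - p J * (∑ j ∈ Finset.range (i + 1), p j) / p i)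
      ≥ (1 / 2 - p J) / (1 - p J) :=
  D_lower_bound_general J p hpos hsum hJlt
end

section
/- Let η > 0 and β ≠ 0 be fixed reals, and let (K_s) be positive integers with K_s/√s → η. For each sufficiently large s let π^{(s)} be the stationary distribution of the M/M/s/K_s queue with ρ = ρ_s := 1 − β/√s and J = s + K_s. Then the stationary probability of delay Σ_{i=s}^{J} π^{(s)}_i converges as s → ∞ to (1 − e^{−βη}) h(η,β), where h(η,β) = 1/(1 − e^{−βη} + β Φ(β)/φ(β)). -/
open Filter Real

/-- Unnormalized stationary weights of the M/M/s/K queue with traffic intensity ρ. -/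
noncomputable def statw (s : ℕ) (ρ : ℝ) (i : ℕ) : ℝ :=
  if i ≤ s then (s * ρ) ^ i / (Nat.factorial i) else ρ ^ (i - s) * (s * ρ) ^ s / (Nat.factorial s)

/-- Stationary distribution of the M/M/s/K queue on `{0,…,s+K}`. -/
noncomputable def statPi (s K : ℕ) (ρ : ℝ) (i : ℕ) : ℝ :=
  statw s ρ i / ∑ j ∈ Finset.range (s + K + 1), statw s ρ j

/-- Standard normal cumulative distribution function. -/
noncomputable def normalCDF (x : ℝ) : ℝ :=
  (Real.sqrt (2 * Real.pi))⁻¹ * ∫ v in Set.Iic x, Real.exp (-v ^ 2 / 2)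

/-- Standard normal density. -/
noncomputable def normalPDF (x : ℝ) : ℝ :=
  Real.exp (-x ^ 2 / 2) / Real.sqrt (2 * Real.pi)

noncomputable def hfun (η β : ℝ) : ℝ :=
  1 / (1 - Real.exp (-(β * η)) + β * normalCDF β / normalPDF β)

/-!
Factoring out `π_s`, the delay probability equals `G / (T + G)` with `G = ∑_{k ≤ K} ρ^k` and
`T = ∑_{m=1}^{s} π_{s-m} / π_s = ∑_{m=1}^{s} s (s-1) ⋯ (s-m+1) / (sρ)^m`.
Since `1 - ρ = β / √s`, `G / √s = (1 - ρ^(K+1)) / β → (1 - e^{-βη}) / β`.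
The sum `T / √s` is a Riemann sum of mesh `1 / √s`: at `m ≈ x √s` its term is
`∏_{j<m} (1 - j/s) · ρ^{-m} → e^{-x²/2} · e^{βx}`, uniformly dominated by a Gaussian,
so by dominated convergence `T / √s → ∫_0^∞ e^{βx - x²/2} dx = Φ(β) / φ(β)`.
-/

open MeasureTheory Finset

lemma tendsto_one_add_pow_of_tendsto_mul {ι : Type*} {l : Filter ι} {u : ι → ℝ} {k : ι → ℕ}
    {t : ℝ} (hu : Tendsto u l (nhds 0)) (hku : Tendsto (fun i => k i * u i) l (nhds t)) :
    Tendsto (fun i => (1 + u i) ^ k i) l (nhds (exp t)) := by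
  have hsmall : ∀ᶠ i in l, |u i| ≤ 1 / 2 :=
    hu.abs.eventually (ge_mem_nhds (by norm_num : |(0:ℝ)| < 1 / 2))
  have hlog : Tendsto (fun i => k i * log (1 + u i)) l (nhds t) := by
    have herr : Tendsto (fun i => k i * log (1 + u i) - k i * u i) l (nhds 0) := by
      refine squeeze_zero_norm' ?_ (by simpa using (hku.abs.const_mul 2).mul hu.abs)
      filter_upwards [hsmall] with i hi
      have h := abs_log_sub_add_sum_range_le (x := -u i) (by rw [abs_neg]; linarith) 1
      norm_num [neg_add_eq_sub] at h
      have hk : (0 : ℝ) ≤ k i := (k i).cast_nonneg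
      rw [Real.norm_eq_abs, ← mul_sub, abs_mul, abs_of_nonneg hk]
      have h2 : u i ^ 2 / (1 - |u i|) ≤ 2 * u i ^ 2 := by
        rw [div_le_iff₀ (by linarith)]
        nlinarith [abs_nonneg (u i), sq_nonneg (u i)]
      calc (k i : ℝ) * |log (1 + u i) - u i| ≤ k i * (2 * u i ^ 2) := by gcongr; exact h.trans h2
        _ = 2 * (k i * |u i|) * |u i| := by rw [← sq_abs]; ring
    simpa using herr.add hku
  refine ((continuous_exp.tendsto t).comp hlog).congr' ?_
  filter_upwards [hsmall] with i hi
  have hpos : 0 < 1 + u i := by linarith [neg_abs_le (u i)]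
  rw [Function.comp_apply, exp_nat_mul, exp_log hpos]

lemma sum_range_cast_id (m : ℕ) : ∑ j ∈ range m, (j : ℝ) = m * (m - 1) / 2 := by
  induction m with
  | zero => simp
  | succ m ih => rw [sum_range_succ, ih]; push_cast; ring

lemma exp_neg_div_eq_prod_exp (m : ℕ) (c : ℝ) :
    exp (-(m * (m - 1) / (2 * c))) = ∏ j ∈ range m, exp (-(j / c)) := by
  rw [← exp_sum, sum_neg_distrib, ← sum_div, sum_range_cast_id, div_div]

lemma descFactorial_div_pow_eq_prod {s m : ℕ} (hm : m ≤ s) :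
    (s.descFactorial m : ℝ) / (s : ℝ) ^ m = ∏ j ∈ range m, (1 - (j : ℝ) / s) := by
  rcases Nat.eq_zero_or_pos s with rfl | hs
  · obtain rfl : m = 0 := Nat.le_zero.1 hm
    simp
  have hs' : (s : ℝ) ≠ 0 := by positivity
  calc (s.descFactorial m : ℝ) / (s : ℝ) ^ m = ∏ j ∈ range m, ((s - j : ℕ) : ℝ) / s := by
        rw [prod_div_distrib, prod_const, card_range, Nat.descFactorial_eq_prod_range,
          Nat.cast_prod]
    _ = _ := prod_congr rfl fun j hj => ?_
  rw [Nat.cast_sub (by linarith [mem_range.1 hj]), sub_div, div_self hs']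

lemma descFactorial_div_pow_le_exp (s m : ℕ) :
    (s.descFactorial m : ℝ) / (s : ℝ) ^ m ≤ exp (-(m * (m - 1) / (2 * s))) := by
  rcases lt_or_ge s m with hsm | hms
  · rw [Nat.descFactorial_eq_zero_iff_lt.2 hsm, Nat.cast_zero, zero_div]
    exact (exp_pos _).le
  rw [descFactorial_div_pow_eq_prod hms, exp_neg_div_eq_prod_exp]
  refine prod_le_prod (fun j hj => ?_) fun j _ => by linarith [add_one_le_exp (-(j / s : ℝ))]
  have hjs : (j : ℝ) < s := by exact_mod_cast (mem_range.1 hj).trans_le hms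
  rw [sub_nonneg, div_le_one (by linarith [(j.cast_nonneg : (0 : ℝ) ≤ j)])]
  exact hjs.le

lemma exp_le_descFactorial_div_pow {s m : ℕ} (hms : m < s) :
    exp (-(m * (m - 1) / (2 * ((s : ℝ) - m)))) ≤ (s.descFactorial m : ℝ) / (s : ℝ) ^ m := by
  have hms' : (m : ℝ) < s := by exact_mod_cast hms
  rw [descFactorial_div_pow_eq_prod hms.le, exp_neg_div_eq_prod_exp]
  refine prod_le_prod (fun j _ => (exp_pos _).le) fun j hj => ?_
  have hjm : (j : ℝ) < m := by exact_mod_cast mem_range.1 hj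
  have hj0 : (0 : ℝ) ≤ j := j.cast_nonneg
  have hsj : 0 < (s : ℝ) - j := by linarith
  calc exp (-(j / ((s : ℝ) - m))) ≤ exp (-(j / ((s : ℝ) - j))) := by
        gcongr
    _ = (exp (j / ((s : ℝ) - j)))⁻¹ := by rw [exp_neg]
    _ ≤ (1 + j / ((s : ℝ) - j))⁻¹ := by
        gcongr; linarith [add_one_le_exp (j / ((s : ℝ) - j))]
    _ = 1 - j / s := by field_simp [(by linarith : (s : ℝ) ≠ 0)]; ring

lemma tendsto_descFactorial_div_pow {ι : Type*} {l : Filter ι} {s m : ι → ℕ} {x : ℝ}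
    (hs : Tendsto s l atTop) (hm : Tendsto (fun i => (m i : ℝ) / √(s i)) l (nhds x)) :
    Tendsto (fun i => ((s i).descFactorial (m i) : ℝ) / (s i : ℝ) ^ m i) l
      (nhds (exp (-(x ^ 2 / 2)))) := by
  have hq : Tendsto (fun i => √(s i : ℝ)) l atTop :=
    tendsto_sqrt_atTop.comp (tendsto_natCast_atTop_atTop.comp hs)
  have hq_inv : Tendsto (fun i => (√(s i : ℝ))⁻¹) l (nhds 0) := tendsto_inv_atTop_zero.comp hq
  have hratio : Tendsto (fun i => (m i : ℝ) / s i) l (nhds 0) := by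
    have h := hm.mul hq_inv
    rw [mul_zero] at h
    refine h.congr' ?_
    filter_upwards [hq.eventually_gt_atTop 0] with i hi
    rw [← div_eq_mul_inv, div_div, mul_self_sqrt (Nat.cast_nonneg _)]
  have hupper : Tendsto (fun i => -((m i : ℝ) * (m i - 1) / (2 * s i))) l
      (nhds (-(x ^ 2 / 2))) := by
    have h := ((hm.mul (hm.sub hq_inv)).div_const 2).neg
    rw [sub_zero, ← sq] at h
    refine h.congr' ?_
    filter_upwards [hq.eventually_gt_atTop 0] with i hi
    have hs_eq := sq_sqrt (Nat.cast_nonneg (α := ℝ) (s i))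
    generalize √(s i : ℝ) = q at hi hs_eq ⊢
    rw [← hs_eq]
    field_simp
  have hlower : Tendsto (fun i => -((m i : ℝ) * (m i - 1) / (2 * ((s i : ℝ) - m i)))) l
      (nhds (-(x ^ 2 / 2))) := by
    have h := hupper.div (tendsto_const_nhds.sub hratio) (by norm_num : (1 : ℝ) - 0 ≠ 0)
    rw [sub_zero, div_one] at h
    refine h.congr' ?_
    filter_upwards [hq.eventually_gt_atTop 0, hratio.eventually (gt_mem_nhds one_pos)]
      with i hi hmi
    have hs0 : (0 : ℝ) < s i := sqrt_pos.1 hi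
    have hsm : (0 : ℝ) < s i - m i := by rw [div_lt_one hs0] at hmi; linarith
    simp only [Pi.div_apply]
    field_simp
  refine tendsto_of_tendsto_of_tendsto_of_le_of_le' ((continuous_exp.tendsto _).comp hlower)
    ((continuous_exp.tendsto _).comp hupper) ?_
    (Eventually.of_forall fun i => descFactorial_div_pow_le_exp (s i) (m i))
  filter_upwards [hratio.eventually (gt_mem_nhds one_pos), hq.eventually_gt_atTop 0]
    with i hi hqi
  have hs0 : (0 : ℝ) < s i := by simpa using hqi
  exact exp_le_descFactorial_div_pow (by exact_mod_cast (div_lt_one hs0).1 hi)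

lemma inv_one_sub_le_exp {u : ℝ} (hu : |u| ≤ 1 / 2) : (1 - u)⁻¹ ≤ exp (2 * |u|) := by
  have h1u : 1 / 2 ≤ 1 - u := by linarith [le_abs_self u]
  calc (1 - u)⁻¹ = 1 + u / (1 - u) := by field_simp; ring
    _ ≤ 2 * |u| + 1 := by
        rw [add_comm, add_le_add_iff_right, div_le_iff₀ (by linarith)]
        rcases le_or_gt 0 u with h | h
        · rw [abs_of_nonneg h]; nlinarith
        · nlinarith [abs_nonneg u]
    _ ≤ exp (2 * |u|) := add_one_le_exp _

lemma tendsto_natCeil_mul_div {ι : Type*} {l : Filter ι} {c : ι → ℝ} (hc : Tendsto c l atTop)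
    {x : ℝ} (hx : 0 ≤ x) : Tendsto (fun i => (⌈x * c i⌉₊ : ℝ) / c i) l (nhds x) := by
  have hupper : Tendsto (fun i => x + (c i)⁻¹) l (nhds x) := by
    simpa using tendsto_const_nhds.add (tendsto_inv_atTop_zero.comp hc)
  refine tendsto_of_tendsto_of_tendsto_of_le_of_le' tendsto_const_nhds hupper ?_ ?_
  all_goals filter_upwards [hc.eventually_gt_atTop 0] with i hi
  · rw [le_div_iff₀ hi]
    exact Nat.le_ceil _
  · rw [div_le_iff₀ hi, add_mul, inv_mul_cancel₀ hi.ne']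
    exact (Nat.ceil_lt_add_one (mul_nonneg hx hi.le)).le

noncomputable def riemannStep (h : ℝ) (a : ℕ → ℝ) (n : ℕ) (x : ℝ) : ℝ :=
  ∑ m ∈ Icc 1 n, (Set.Ioc (((m : ℝ) - 1) * h) (m * h)).indicator (fun _ => a m) x

section riemannStep

variable {h : ℝ} {a : ℕ → ℝ} {n : ℕ}

lemma mem_Ioc_iff_natCeil_div_eq (hh : 0 < h) {m : ℕ} (hm : m ≠ 0) {x : ℝ} :
    x ∈ Set.Ioc (((m : ℝ) - 1) * h) (m * h) ↔ ⌈x / h⌉₊ = m := by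
  rw [Nat.ceil_eq_iff hm, Nat.cast_pred (Nat.pos_of_ne_zero hm), lt_div_iff₀ hh,
    div_le_iff₀ hh, Set.mem_Ioc]

lemma riemannStep_eq_indicator (hh : 0 < h) (x : ℝ) :
    riemannStep h a n x = (Set.Ioc 0 (n * h)).indicator (fun y => a ⌈y / h⌉₊) x := by
  have hterm : ∀ m ∈ Icc 1 n, (Set.Ioc (((m : ℝ) - 1) * h) (m * h)).indicator (fun _ => a m) x
      = if ⌈x / h⌉₊ = m then a ⌈x / h⌉₊ else 0 := by
    intro m hm
    have hm0 : m ≠ 0 := by linarith [(mem_Icc.1 hm).1]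
    by_cases hx : ⌈x / h⌉₊ = m
    · rw [Set.indicator_of_mem ((mem_Ioc_iff_natCeil_div_eq hh hm0).2 hx), if_pos hx, hx]
    · rw [Set.indicator_of_notMem (mt (mem_Ioc_iff_natCeil_div_eq hh hm0).1 hx), if_neg hx]
  rw [riemannStep, sum_congr rfl hterm, sum_ite_eq, Set.indicator_apply]
  refine if_congr ?_ rfl rfl
  rw [mem_Icc, Nat.one_le_ceil_iff, Nat.ceil_le, div_pos_iff_of_pos_right hh, div_le_iff₀ hh,
    Set.mem_Ioc]

lemma integral_riemannStep (hh : 0 ≤ h) :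
    ∫ x, riemannStep h a n x = h * ∑ m ∈ Icc 1 n, a m := by
  have hint : ∀ m ∈ Icc 1 n,
      Integrable ((Set.Ioc (((m : ℝ) - 1) * h) (m * h)).indicator (fun _ => a m)) := fun m _ =>
    (integrable_indicator_iff measurableSet_Ioc).2 (integrableOn_const (by simp))
  simp only [riemannStep]
  rw [integral_finsetSum _ hint, mul_sum]
  refine sum_congr rfl fun m _ => ?_
  rw [integral_indicator_const _ measurableSet_Ioc, measureReal_def, Real.volume_Ioc,
    ENNReal.toReal_ofReal (by nlinarith), smul_eq_mul]
  ring

lemma measurable_riemannStep : Measurable (riemannStep h a n) :=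
  Finset.measurable_sum _ fun _ _ => measurable_const.indicator measurableSet_Ioc

end riemannStep

theorem tendsto_mul_sum_of_dominated {ι : Type*} {l : Filter ι} [l.IsCountablyGenerated]
    {h : ι → ℝ} {a : ι → ℕ → ℝ} {n : ι → ℕ} {f g : ℝ → ℝ}
    (hh : ∀ᶠ i in l, 0 < h i) (hn : Tendsto (fun i => n i * h i) l atTop)
    (hg : IntegrableOn g (Set.Ioi 0))
    (hbound : ∀ᶠ i in l, ∀ x > 0, |a i ⌈x / h i⌉₊| ≤ g x)
    (hlim : ∀ x > 0, Tendsto (fun i => a i ⌈x / h i⌉₊) l (nhds (f x))) :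
    Tendsto (fun i => h i * ∑ m ∈ Icc 1 (n i), a i m) l (nhds (∫ x in Set.Ioi 0, f x)) := by
  have hdct := tendsto_integral_filter_of_dominated_convergence (μ := volume.restrict (Set.Ioi 0))
    (F := fun i => riemannStep (h i) (a i) (n i)) g
    (Eventually.of_forall fun _ => measurable_riemannStep.aestronglyMeasurable)
    (by
      filter_upwards [hh, hbound] with i hi hb
      refine ae_restrict_of_forall_mem measurableSet_Ioi fun x hx => ?_
      rw [riemannStep_eq_indicator hi]
      exact (norm_indicator_le_norm_self _ _).trans (hb x hx))
    hg
    (ae_restrict_of_forall_mem measurableSet_Ioi fun x hx => by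
      refine (hlim x hx).congr' ?_
      filter_upwards [hh, hn.eventually_ge_atTop x] with i hi hxi
      rw [riemannStep_eq_indicator hi, Set.indicator_of_mem (Set.mem_Ioc.2 ⟨hx, hxi⟩)])
  refine hdct.congr' ?_
  filter_upwards [hh] with i hi
  rw [setIntegral_eq_integral_of_forall_compl_eq_zero fun x hx => ?_, integral_riemannStep hi.le]
  rw [riemannStep_eq_indicator hi, Set.indicator_of_notMem fun hx' => hx hx'.1]

lemma integrable_exp_neg_sq_half_add (b c : ℝ) :
    Integrable (fun x : ℝ => exp (-x ^ 2 / 2 + b * x + c)) := by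
  refine (((integrable_exp_neg_mul_sq (b := 1 / 2) (by norm_num)).comp_sub_right b).const_mul
    (exp (c + b ^ 2 / 2))).congr (ae_of_all _ fun x => ?_)
  simp only [← exp_add]
  ring_nf

lemma integral_exp_mul_sub_sq_half_Ioi (β : ℝ) :
    ∫ x in Set.Ioi 0, exp (β * x - x ^ 2 / 2) = normalCDF β / normalPDF β := by
  have hshift : ∫ y in Set.Iic 0, exp (-(y + β) ^ 2 / 2) = ∫ v in Set.Iic β, exp (-v ^ 2 / 2) := by
    simpa using (measurePreserving_add_right volume β).setIntegral_preimage_emb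
      (measurableEmbedding_addRight β) (fun v => exp (-v ^ 2 / 2)) (Set.Iic β)
  have hsubst : ∫ x in Set.Ioi 0, exp (β * x - x ^ 2 / 2)
      = exp (β ^ 2 / 2) * ∫ v in Set.Iic β, exp (-v ^ 2 / 2) := by
    have hneg := integral_comp_neg_Ioi 0 (fun y => exp (-(y + β) ^ 2 / 2))
    calc ∫ x in Set.Ioi 0, exp (β * x - x ^ 2 / 2)
        = ∫ x in Set.Ioi 0, exp (β ^ 2 / 2) * exp (-(-x + β) ^ 2 / 2) := by
          congr 1 with x
          rw [← exp_add]
          ring_nf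
      _ = exp (β ^ 2 / 2) * ∫ v in Set.Iic β, exp (-v ^ 2 / 2) := by
          rw [integral_const_mul, hneg, neg_zero, hshift]
  have hexp : exp (β ^ 2 / 2) * exp (-(β ^ 2 / 2)) = 1 := by
    rw [← exp_add, add_neg_cancel, exp_zero]
  rw [hsubst, normalCDF, normalPDF]
  generalize ∫ v in Set.Iic β, exp (-v ^ 2 / 2) = I
  field_simp
  linear_combination I * hexp

/-- The ratio `π_{s-m} / π_s` of stationary probabilities below the number of servers. -/
noncomputable def lowerWeight (s : ℕ) (ρ : ℝ) (m : ℕ) : ℝ := s.descFactorial m / (s * ρ) ^ m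

lemma lowerWeight_eq (s : ℕ) (ρ : ℝ) (m : ℕ) :
    lowerWeight s ρ m = (s.descFactorial m : ℝ) / (s : ℝ) ^ m * (ρ ^ m)⁻¹ := by
  rw [lowerWeight, mul_pow, ← div_div, div_eq_mul_inv]

lemma lowerWeight_nonneg (s : ℕ) {ρ : ℝ} (hρ : 0 ≤ ρ) (m : ℕ) : 0 ≤ lowerWeight s ρ m := by
  unfold lowerWeight; positivity

lemma lowerWeight_one_sub_le_exp (s m : ℕ) {u : ℝ} (hu : |u| ≤ 1 / 2) :
    lowerWeight s (1 - u) m ≤ exp (-(m * (m - 1) / (2 * s)) + 2 * |u| * m) := by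
  have : 0 < 1 - u := by linarith [le_abs_self u]
  rw [lowerWeight_eq, exp_add, mul_comm _ (m : ℝ), exp_nat_mul, ← inv_pow]
  gcongr
  · exact descFactorial_div_pow_le_exp s m
  · exact inv_one_sub_le_exp hu

lemma statw_add (s k : ℕ) (ρ : ℝ) : statw s ρ (s + k) = ρ ^ k * statw s ρ s := by
  cases k with
  | zero => simp
  | succ k => simp [statw, mul_div_assoc]

lemma statw_sub {s m : ℕ} (hm : m ≤ s) {ρ : ℝ} (hρ : (s : ℝ) * ρ ≠ 0) :
    statw s ρ (s - m) = lowerWeight s ρ m * statw s ρ s := by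
  have hfact : ((s - m).factorial : ℝ) * s.descFactorial m = s.factorial := by
    exact_mod_cast Nat.factorial_mul_descFactorial hm
  have hpow : ((s : ℝ) * ρ) ^ s = (s * ρ) ^ (s - m) * (s * ρ) ^ m := by
    rw [← pow_add, Nat.sub_add_cancel hm]
  have hdesc : (s.descFactorial m : ℝ) ≠ 0 := by
    exact_mod_cast (Nat.descFactorial_eq_zero_iff_lt.not.2 (not_lt.2 hm))
  rw [statw, if_pos (Nat.sub_le s m), statw, if_pos le_rfl, lowerWeight, hpow, ← hfact]
  field_simp

lemma sum_Icc_statw (s K : ℕ) (ρ : ℝ) :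
    ∑ i ∈ Icc s (s + K), statw s ρ i = statw s ρ s * ∑ k ∈ range (K + 1), ρ ^ k := by
  rw [← Ico_add_one_right_eq_Icc, sum_Ico_eq_sum_range, show s + K + 1 - s = K + 1 by omega,
    mul_sum]
  exact sum_congr rfl fun k _ => by rw [statw_add, mul_comm]

lemma sum_range_statw {s : ℕ} {ρ : ℝ} (hρ : (s : ℝ) * ρ ≠ 0) :
    ∑ j ∈ range s, statw s ρ j = statw s ρ s * ∑ m ∈ Icc 1 s, lowerWeight s ρ m := by
  rw [mul_sum]
  refine sum_nbij' (fun j => s - j) (fun m => s - m) ?_ ?_ ?_ ?_ fun j hj => ?_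
  all_goals try (intro j hj; simp only [mem_range, mem_Icc] at hj ⊢; omega)
  conv_lhs => rw [← Nat.sub_sub_self (mem_range.1 hj).le]
  rw [statw_sub (Nat.sub_le _ _) hρ, mul_comm]

lemma sum_Icc_statPi {s : ℕ} (K : ℕ) {ρ : ℝ} (hs : 0 < s) (hρ : 0 < ρ) :
    ∑ i ∈ Icc s (s + K), statPi s K ρ i = (∑ k ∈ range (K + 1), ρ ^ k) /
      (∑ m ∈ Icc 1 s, lowerWeight s ρ m + ∑ k ∈ range (K + 1), ρ ^ k) := by
  have hsρ : (0 : ℝ) < s * ρ := by positivity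
  have hw : statw s ρ s ≠ 0 := by rw [statw, if_pos le_rfl]; positivity
  have hsplit : ∑ j ∈ range (s + K + 1), statw s ρ j
      = ∑ j ∈ range s, statw s ρ j + ∑ i ∈ Icc s (s + K), statw s ρ i := by
    rw [range_eq_Ico, range_eq_Ico, ← Ico_add_one_right_eq_Icc]
    exact (sum_Ico_consecutive _ (Nat.zero_le s) (by omega)).symm
  simp only [statPi]
  rw [← sum_div, hsplit, sum_range_statw hsρ.ne', sum_Icc_statw, ← mul_add,
    mul_div_mul_left _ _ hw]

lemma sum_Icc_statPi_one_sub_div_sqrt {s : ℕ} (K : ℕ) {β : ℝ} (hβ : β ≠ 0) (hs : 0 < s)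
    (hρ : 0 < 1 - β / √s) :
    ∑ i ∈ Icc s (s + K), statPi s K (1 - β / √s) i = (1 - (1 - β / √s) ^ (K + 1)) /
      (β * ((√s)⁻¹ * ∑ m ∈ Icc 1 s, lowerWeight s (1 - β / √s) m)
        + (1 - (1 - β / √s) ^ (K + 1))) := by
  have hq : 0 < √(s : ℝ) := sqrt_pos.2 (by exact_mod_cast hs)
  have hβq : β / √s ≠ 0 := div_ne_zero hβ hq.ne'
  have hgeom : ∑ k ∈ range (K + 1), (1 - β / √s) ^ k = (1 - (1 - β / √s) ^ (K + 1)) / (β / √s) := by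
    rw [geom_sum_eq (by simpa using hβq), sub_sub_cancel_left, div_neg, ← neg_div, neg_sub]
  rw [sum_Icc_statPi K hs hρ, hgeom, ← mul_div_mul_right _ _ hβq]
  congr 1
  · exact div_mul_cancel₀ _ hβq
  · field_simp

lemma tendsto_sqrt_natCast_atTop : Tendsto (fun s : ℕ => √(s : ℝ)) atTop atTop :=
  tendsto_sqrt_atTop.comp tendsto_natCast_atTop_atTop

lemma tendsto_div_sqrt_natCast (c : ℝ) : Tendsto (fun s : ℕ => c / √(s : ℝ)) atTop (nhds 0) :=
  tendsto_const_nhds.div_atTop tendsto_sqrt_natCast_atTop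

lemma lowerWeight_natCeil_le (β : ℝ) {x : ℝ} (hx : 0 < x) {s : ℕ} (hs : 1 ≤ √s)
    (hβ : 2 * |β| ≤ √s) :
    lowerWeight s (1 - β / √s) ⌈x * √s⌉₊ ≤ exp (-x ^ 2 / 2 + (1 / 2 + 2 * |β|) * x + 2 * |β|) := by
  have hq : (0 : ℝ) < √s := by linarith
  have hsq : (s : ℝ) = √s ^ 2 := (sq_sqrt s.cast_nonneg).symm
  have hm_ge : x * √s ≤ ⌈x * √s⌉₊ := Nat.le_ceil _
  have hm_lt : (⌈x * √s⌉₊ : ℝ) < x * √s + 1 := Nat.ceil_lt_add_one (by positivity)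
  have hm1 : (1 : ℝ) ≤ ⌈x * √s⌉₊ := by exact_mod_cast Nat.one_le_ceil_iff.2 (by positivity)
  have hu : |β / √s| ≤ 1 / 2 := by
    rw [abs_div, abs_of_pos hq, div_le_iff₀ hq]; linarith
  refine (lowerWeight_one_sub_le_exp s _ hu).trans (exp_le_exp.2 ?_)
  generalize ⌈x * √s⌉₊ = m at hm_ge hm_lt hm1
  rw [abs_div, abs_of_pos hq]
  generalize √s = q at hq hs hm_ge hm_lt hsq
  rw [hsq]
  have hquad : x ^ 2 / 2 - x / 2 ≤ m * (m - 1) / (2 * q ^ 2) := by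
    rw [le_div_iff₀ (by positivity)]
    nlinarith [mul_nonneg (sub_nonneg.2 hm_ge) (by linarith : (0 : ℝ) ≤ m + x * q - 1),
      mul_nonneg (mul_nonneg hx.le hq.le) (sub_nonneg.2 hs)]
  have hlin : |β| / q * m ≤ |β| * x + |β| := by
    rw [div_mul_eq_mul_div, div_le_iff₀ hq]
    nlinarith [abs_nonneg β]
  linarith

lemma tendsto_lowerWeight_natCeil (β : ℝ) {x : ℝ} (hx : 0 ≤ x) :
    Tendsto (fun s : ℕ => lowerWeight s (1 - β / √s) ⌈x * √s⌉₊) atTop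
      (nhds (exp (β * x - x ^ 2 / 2))) := by
  have hm := tendsto_natCeil_mul_div tendsto_sqrt_natCast_atTop hx
  have hdesc := tendsto_descFactorial_div_pow tendsto_id hm
  have hpow : Tendsto (fun s : ℕ => (1 + -β / √s) ^ ⌈x * √s⌉₊) atTop (nhds (exp (-β * x))) :=
    tendsto_one_add_pow_of_tendsto_mul (tendsto_div_sqrt_natCast (-β))
      ((hm.const_mul (-β)).congr fun s => by ring)
  have key := hdesc.mul (hpow.inv₀ (exp_ne_zero _))
  rw [← exp_neg, ← exp_add, show -(x ^ 2 / 2) + -(-β * x) = β * x - x ^ 2 / 2 by ring] at key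
  exact key.congr fun s => by rw [lowerWeight_eq, sub_eq_add_neg, neg_div, id]

theorem tendsto_inv_sqrt_mul_sum_lowerWeight (β : ℝ) :
    Tendsto (fun s : ℕ => (√s)⁻¹ * ∑ m ∈ Icc 1 s, lowerWeight s (1 - β / √s) m) atTop
      (nhds (normalCDF β / normalPDF β)) := by
  rw [← integral_exp_mul_sub_sq_half_Ioi]
  refine tendsto_mul_sum_of_dominated (n := id) (a := fun s => lowerWeight s (1 - β / √s))
    (g := fun x => exp (-x ^ 2 / 2 + (1 / 2 + 2 * |β|) * x + 2 * |β|)) ?_ ?_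
    (integrable_exp_neg_sq_half_add _ _).integrableOn ?_ fun x hx => ?_
  · filter_upwards [tendsto_sqrt_natCast_atTop.eventually_gt_atTop 0] with s hs
    exact inv_pos.2 hs
  · exact tendsto_sqrt_natCast_atTop.congr fun s => by rw [id, ← div_eq_mul_inv, div_sqrt]
  · filter_upwards [tendsto_sqrt_natCast_atTop.eventually_ge_atTop 1,
      tendsto_sqrt_natCast_atTop.eventually_ge_atTop (2 * |β|)] with s hs hβ x hx
    have hρ : 0 ≤ 1 - β / √s := by
      rw [sub_nonneg, div_le_one (by linarith)]
      linarith [le_abs_self β, abs_nonneg β]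
    rw [div_inv_eq_mul, abs_of_nonneg (lowerWeight_nonneg s hρ _)]
    exact lowerWeight_natCeil_le β hx hs hβ
  · simpa only [div_inv_eq_mul] using tendsto_lowerWeight_natCeil β hx.le

lemma tendsto_one_sub_div_sqrt_pow {β η : ℝ} {K : ℕ → ℕ}
    (hK : Tendsto (fun s : ℕ => (K s : ℝ) / √s) atTop (nhds η)) :
    Tendsto (fun s : ℕ => (1 - β / √s) ^ (K s + 1)) atTop (nhds (exp (-(β * η)))) := by
  have hmul : Tendsto (fun s : ℕ => ((K s + 1 : ℕ) : ℝ) * (-β / √s)) atTop (nhds (-(β * η))) := by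
    have h := (hK.add (tendsto_div_sqrt_natCast 1)).const_mul (-β)
    rw [add_zero, neg_mul] at h
    refine h.congr fun s => ?_
    push_cast
    ring
  simpa [sub_eq_add_neg, neg_div] using
    tendsto_one_add_pow_of_tendsto_mul (tendsto_div_sqrt_natCast (-β)) hmul

lemma mul_one_sub_exp_neg_mul_pos {β η : ℝ} (hβ : β ≠ 0) (hη : 0 < η) :
    0 < β * (1 - exp (-(β * η))) := by
  rcases hβ.lt_or_gt with hneg | hpos
  · refine mul_pos_of_neg_of_neg hneg (sub_neg.2 (one_lt_exp_iff.2 ?_))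
    nlinarith
  · refine mul_pos hpos (sub_pos.2 (exp_lt_one_iff.2 ?_))
    nlinarith

theorem delay_probability_qed_general (η β : ℝ) (hη : 0 < η) (hβ : β ≠ 0) (K : ℕ → ℕ)
    (hlim : Tendsto (fun s : ℕ => (K s : ℝ) / Real.sqrt s) atTop (nhds η)) :
    Tendsto (fun s : ℕ =>
        ∑ i ∈ Finset.Icc s (s + K s), statPi s (K s) (1 - β / Real.sqrt s) i)
      atTop (nhds ((1 - Real.exp (-(β * η))) * hfun η β)) := by
  set R := normalCDF β / normalPDF β
  have hR : 0 ≤ R := by unfold R normalCDF normalPDF; positivity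
  have hden : β * R + (1 - exp (-(β * η))) ≠ 0 := by
    intro h
    have h0 : β * (β * R + (1 - exp (-(β * η)))) = 0 := by rw [h, mul_zero]
    nlinarith [mul_nonneg (sq_nonneg β) hR, mul_one_sub_exp_neg_mul_pos hβ hη]
  have hρ : ∀ᶠ s : ℕ in atTop, 0 < 1 - β / √s := by
    have h := tendsto_const_nhds.sub (tendsto_div_sqrt_natCast β) (a := 1)
    exact h.eventually (lt_mem_nhds (by norm_num : (0 : ℝ) < 1 - 0))
  have hnum := (tendsto_const_nhds (x := 1)).sub (tendsto_one_sub_div_sqrt_pow (β := β) hlim)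
  have hlimit :=
    hnum.div (((tendsto_inv_sqrt_mul_sum_lowerWeight β).const_mul β).add hnum) hden
  rw [hfun, mul_one_div, mul_div_assoc, add_comm (1 - _)]
  refine hlimit.congr' ?_
  filter_upwards [eventually_gt_atTop 0, hρ] with s hs hρs
  exact (sum_Icc_statPi_one_sub_div_sqrt (K s) hβ hs hρs).symm

theorem delay_probability_qed (η β : ℝ) (hη : 0 < η) (hβ : β ≠ 0) (K : ℕ → ℕ)
    (hK : ∀ s, 0 < K s)
    (hlim : Tendsto (fun s : ℕ => (K s : ℝ) / Real.sqrt s) atTop (nhds η)) :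
    Tendsto (fun s : ℕ =>
        ∑ i ∈ Finset.Icc s (s + K s), statPi s (K s) (1 - β / Real.sqrt s) i)
      atTop (nhds ((1 - Real.exp (-(β * η))) * hfun η β)) :=
  delay_probability_qed_general η β hη hβ K hlim
end

section
/- The improper Riemann integral ∫_0^∞ Φ(−u) (1 − e^{u²/2} Φ(−u)) du equals (1 − log √2)/√(2π), i.e. (1 − (1/2) log 2)/√(2π). -/
open Real

/-!
Write `c = 1 / √(2π)`; the integral is `∫ Φ(-u) du - ∫ exp (u² / 2) Φ(-u)² du` over `u > 0`.
For `u > 0` the substitution `v = u s` gives `Φ(-u) = c u ∫_{s > 1} exp (-s² u² / 2) ds`.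
Multiplying by a weight `w(u) ≥ 0` and exchanging the integrals (everything is nonnegative, so we
work with `ℝ≥0∞`-valued integrals and Tonelli) leaves `u`-integrals with explicit antiderivatives.
With `w = 1` the inner integral is `c / s²`, so `∫ Φ(-u) du = c`; with `w(u) = exp (u² / 2) Φ(-u)`
it is `c / (2 s (s + 1))`, so `∫ exp (u² / 2) Φ(-u)² du = c log 2 / 2`.
-/

open Set MeasureTheory Filter Topology

theorem lintegral_Ioi_ofReal_of_hasDerivAt_of_nonneg {g g' : ℝ → ℝ} {a l : ℝ}
    (hderiv : ∀ x ∈ Ici a, HasDerivAt g (g' x) x) (hg' : ∀ x ∈ Ioi a, 0 ≤ g' x)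
    (hg : Tendsto g atTop (𝓝 l)) :
    ∫⁻ x in Ioi a, ENNReal.ofReal (g' x) = ENNReal.ofReal (l - g a) := by
  rw [← ofReal_integral_eq_lintegral_ofReal (integrableOn_Ioi_deriv_of_nonneg' hderiv hg' hg)
    ((ae_restrict_iff' measurableSet_Ioi).2 (ae_of_all _ hg')),
    integral_Ioi_of_hasDerivAt_of_nonneg' hderiv hg' hg]

theorem integrable_and_integral_eq_of_lintegral_ofReal_eq {α : Type*} [MeasurableSpace α]
    {μ : Measure α} {f : α → ℝ} {v : ℝ} (hf : AEStronglyMeasurable f μ) (hf₀ : 0 ≤ᵐ[μ] f)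
    (hv : 0 ≤ v) (h : ∫⁻ x, ENNReal.ofReal (f x) ∂μ = ENNReal.ofReal v) :
    Integrable f μ ∧ ∫ x, f x ∂μ = v :=
  ⟨⟨hf, (hasFiniteIntegral_iff_ofReal hf₀).2 (h ▸ ENNReal.ofReal_lt_top)⟩,
    by rw [integral_eq_lintegral_of_nonneg_ae hf₀ hf, h, ENNReal.toReal_ofReal hv]⟩

theorem integrable_exp_neg_sq_div_two : Integrable fun v : ℝ => exp (-v ^ 2 / 2) := by
  simpa [neg_div, div_eq_inv_mul] using integrable_exp_neg_mul_sq (b := 1 / 2) (by norm_num)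

theorem hasDerivAt_exp_neg_mul_sq_div_two (a x : ℝ) :
    HasDerivAt (fun x => exp (-(a * x ^ 2) / 2)) (-(a * x) * exp (-(a * x ^ 2) / 2)) x := by
  refine ((((hasDerivAt_pow 2 x).const_mul a).fun_neg.div_const 2).exp).congr_deriv ?_
  push_cast
  ring

theorem tendsto_exp_neg_mul_sq_div_two {a : ℝ} (ha : 0 < a) :
    Tendsto (fun x : ℝ => exp (-(a * x ^ 2) / 2)) atTop (𝓝 0) := by
  refine tendsto_exp_atBot.comp ?_
  simp_rw [neg_div]
  exact tendsto_neg_atTop_atBot.comp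
    (((tendsto_pow_atTop two_ne_zero).const_mul_atTop ha).atTop_div_const two_pos)

theorem lintegral_Ioi_zero_ofReal_mul_exp_neg_mul_sq_div_two {C a : ℝ} (hC : 0 ≤ C)
    (ha : 0 < a) :
    ∫⁻ u in Ioi 0, ENNReal.ofReal (C * u * exp (-(a * u ^ 2) / 2)) = ENNReal.ofReal (C / a) := by
  have hderiv : ∀ u ∈ Ici (0 : ℝ), HasDerivAt (fun u => -(C / a) * exp (-(a * u ^ 2) / 2))
      (C * u * exp (-(a * u ^ 2) / 2)) u := fun u _ => by
    refine ((hasDerivAt_exp_neg_mul_sq_div_two a u).const_mul (-(C / a))).congr_deriv ?_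
    field_simp
  have hlim : Tendsto (fun u => -(C / a) * exp (-(a * u ^ 2) / 2)) atTop (𝓝 0) := by
    simpa using (tendsto_exp_neg_mul_sq_div_two ha).const_mul (-(C / a))
  rw [lintegral_Ioi_ofReal_of_hasDerivAt_of_nonneg hderiv (fun u (hu : 0 < u) => by positivity)
    hlim]
  simp

theorem lintegral_Ioi_one_ofReal_div_sq {C : ℝ} (hC : 0 ≤ C) :
    ∫⁻ s in Ioi 1, ENNReal.ofReal (C / s ^ 2) = ENNReal.ofReal C := by
  have hderiv : ∀ s ∈ Ici (1 : ℝ), HasDerivAt (fun s => -C * s⁻¹) (C / s ^ 2) s :=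
    fun s (hs : 1 ≤ s) => by
      refine ((hasDerivAt_inv (by linarith : (0 : ℝ) < s).ne').const_mul (-C)).congr_deriv ?_
      ring
  have hlim : Tendsto (fun s : ℝ => -C * s⁻¹) atTop (𝓝 0) := by
    simpa using tendsto_inv_atTop_zero.const_mul (-C)
  rw [lintegral_Ioi_ofReal_of_hasDerivAt_of_nonneg hderiv (fun s _ => by positivity) hlim]
  simp

theorem lintegral_Ioi_one_ofReal_div_mul_add_one {C : ℝ} (hC : 0 ≤ C) :
    ∫⁻ r in Ioi 1, ENNReal.ofReal (C / (r * (r + 1))) = ENNReal.ofReal (C * log 2) := by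
  have hderiv : ∀ r ∈ Ici (1 : ℝ), HasDerivAt (fun r => -C * (log (r + 1) - log r))
      (C / (r * (r + 1))) r := fun r (hr : 1 ≤ r) => by
    refine ((((hasDerivAt_id' r).add_const 1).log (by positivity)).sub
      (hasDerivAt_log (by positivity))).const_mul (-C) |>.congr_deriv ?_
    field_simp
    ring
  have hlim : Tendsto (fun r => -C * (log (r + 1) - log r)) atTop (𝓝 0) := by
    simpa using (tendsto_log_comp_add_sub_log 1).const_mul (-C)
  rw [lintegral_Ioi_ofReal_of_hasDerivAt_of_nonneg hderiv
    (fun r (hr : 1 < r) => div_nonneg hC (by nlinarith)) hlim]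
  norm_num

theorem normalCDF_nonneg (x : ℝ) : 0 ≤ normalCDF x :=
  mul_nonneg (by positivity) (integral_nonneg fun _ => (exp_pos _).le)

theorem normalCDF_eq_normalCDF_zero_add (x : ℝ) :
    normalCDF x = normalCDF 0 + (√(2 * π))⁻¹ * ∫ v in 0..x, exp (-v ^ 2 / 2) := by
  rw [normalCDF, normalCDF, ← intervalIntegral.integral_Iic_sub_Iic
    integrable_exp_neg_sq_div_two.integrableOn integrable_exp_neg_sq_div_two.integrableOn]
  ring

theorem hasDerivAt_normalCDF (x : ℝ) :
    HasDerivAt normalCDF ((√(2 * π))⁻¹ * exp (-x ^ 2 / 2)) x := by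
  rw [funext normalCDF_eq_normalCDF_zero_add]
  exact ((((by fun_prop : Continuous fun v : ℝ => exp (-v ^ 2 / 2)).integral_hasStrictDerivAt
    0 x).hasDerivAt).const_mul _).const_add _

theorem continuous_normalCDF : Continuous normalCDF :=
  continuous_iff_continuousAt.2 fun x => (hasDerivAt_normalCDF x).continuousAt

theorem tendsto_normalCDF_atBot : Tendsto normalCDF atBot (𝓝 0) := by
  have h := ((intervalIntegral_tendsto_integral_Iic 0
    integrable_exp_neg_sq_div_two.integrableOn tendsto_id).const_mul (√(2 * π))⁻¹).const_sub
    (normalCDF 0)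
  rw [← normalCDF, sub_self] at h
  refine h.congr fun x => ?_
  rw [normalCDF_eq_normalCDF_zero_add x, intervalIntegral.integral_symm 0]
  simp only [id]
  ring

theorem normalCDF_neg_eq_integral_Ioi (u : ℝ) :
    normalCDF (-u) = (√(2 * π))⁻¹ * ∫ v in Ioi u, exp (-v ^ 2 / 2) := by
  rw [normalCDF, ← integral_comp_neg_Ioi]
  simp only [neg_sq]

theorem normalCDF_zero : normalCDF 0 = 1 / 2 := by
  have h : (fun v : ℝ => exp (-v ^ 2 / 2)) = fun v => exp (-(1 / 2) * v ^ 2) := by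
    ext; ring_nf
  rw [← neg_zero, normalCDF_neg_eq_integral_Ioi, h, integral_gaussian_Ioi,
    show π / (1 / 2) = 2 * π by ring]
  have : 0 < √(2 * π) := by positivity
  field_simp

theorem normalCDF_neg_eq_integral_Ioi_one {u : ℝ} (hu : 0 < u) :
    normalCDF (-u) = ∫ s in Ioi 1, (√(2 * π))⁻¹ * u * exp (-(s ^ 2 * u ^ 2) / 2) := by
  have h := integral_comp_mul_left_Ioi (fun v => exp (-v ^ 2 / 2)) 1 hu
  simp only [mul_one, smul_eq_mul, mul_pow, mul_comm (u ^ 2)] at h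
  rw [normalCDF_neg_eq_integral_Ioi, integral_const_mul, h]
  field_simp

theorem lintegral_Ioi_mul_normalCDF_neg {w : ℝ → ℝ} (hw : Continuous w) (hw₀ : ∀ u, 0 ≤ w u) :
    ∫⁻ u in Ioi 0, ENNReal.ofReal (w u * normalCDF (-u)) =
      ∫⁻ s in Ioi 1, ∫⁻ u in Ioi 0,
        ENNReal.ofReal (w u * ((√(2 * π))⁻¹ * u * exp (-(s ^ 2 * u ^ 2) / 2))) := by
  rw [lintegral_lintegral_swap ((Continuous.measurable (by fun_prop)).ennreal_ofReal.aemeasurable)]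
  refine setLIntegral_congr_fun measurableSet_Ioi fun u (hu : 0 < u) => ?_
  rw [normalCDF_neg_eq_integral_Ioi_one hu, ← integral_const_mul,
    ofReal_integral_eq_lintegral_ofReal]
  · refine (((integrable_exp_neg_sq_div_two.comp_mul_left' hu.ne').const_mul
      ((√(2 * π))⁻¹ * u)).const_mul (w u)).integrableOn.congr_fun (fun s _ => ?_) measurableSet_Ioi
    ring_nf
  · exact ae_of_all _ fun s => mul_nonneg (hw₀ u) (by positivity)

theorem lintegral_normalCDF_neg_Ioi :
    ∫⁻ u in Ioi 0, ENNReal.ofReal (normalCDF (-u)) = ENNReal.ofReal (√(2 * π))⁻¹ := by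
  have h := lintegral_Ioi_mul_normalCDF_neg (w := fun _ => 1) continuous_const
    fun _ => zero_le_one
  simp only [one_mul] at h
  rw [h, setLIntegral_congr_fun measurableSet_Ioi fun s (hs : 1 < s) =>
    lintegral_Ioi_zero_ofReal_mul_exp_neg_mul_sq_div_two (by positivity) (by nlinarith)]
  exact lintegral_Ioi_one_ofReal_div_sq (by positivity)

theorem lintegral_Ioi_exp_mul_normalCDF_neg_mul {r : ℝ} (hr : 1 < r) :
    ∫⁻ u in Ioi 0, ENNReal.ofReal (exp (u ^ 2 / 2) * normalCDF (-u) *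
      ((√(2 * π))⁻¹ * u * exp (-(r ^ 2 * u ^ 2) / 2))) =
      ENNReal.ofReal ((√(2 * π))⁻¹ / 2 / (r * (r + 1))) := by
  set c := (√(2 * π))⁻¹
  set a := r ^ 2 - 1 with ha_def
  have ha : 0 < a := by nlinarith
  -- Integrate `u exp (-a u² / 2)` by parts against `Φ(-u)`: the remaining term
  -- `c ∫ exp (-r² u² / 2) du` is again a Gaussian tail, `Φ(-r u) / r`.
  set G := fun u => c * (normalCDF (-(r * u)) / r - exp (-(a * u ^ 2) / 2) * normalCDF (-u)) / a
  have hderiv : ∀ u ∈ Ici (0 : ℝ), HasDerivAt G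
      (exp (u ^ 2 / 2) * normalCDF (-u) * (c * u * exp (-(r ^ 2 * u ^ 2) / 2))) u := by
    intro u _
    have h₁ : HasDerivAt (fun u => normalCDF (-(r * u)))
        (c * exp (-(-(r * u)) ^ 2 / 2) * -(r * 1)) u :=
      (hasDerivAt_normalCDF _).comp u ((hasDerivAt_id' u).const_mul r).fun_neg
    have h₂ : HasDerivAt (fun u => normalCDF (-u)) (c * exp (-(-u) ^ 2 / 2) * -1) u :=
      (hasDerivAt_normalCDF _).comp u (hasDerivAt_neg u)
    refine ((((h₁.div_const r).sub ((hasDerivAt_exp_neg_mul_sq_div_two a u).mul h₂)).const_mul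
      c).div_const a).congr_deriv ?_
    have hE : exp (u ^ 2 / 2) * exp (-(r ^ 2 * u ^ 2) / 2) = exp (-(a * u ^ 2) / 2) := by
      rw [← exp_add, ha_def]; ring_nf
    have hR : exp (-(a * u ^ 2) / 2) * exp (-(-u) ^ 2 / 2) = exp (-(-(r * u)) ^ 2 / 2) := by
      rw [← exp_add, ha_def]; ring_nf
    rw [← hR, ← hE]
    clear_value c a
    field_simp
    ring
  have hlim : Tendsto G atTop (𝓝 0) := by
    have hN : Tendsto (fun u => normalCDF (-u)) atTop (𝓝 0) :=
      tendsto_normalCDF_atBot.comp tendsto_neg_atTop_atBot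
    have hNr : Tendsto (fun u => normalCDF (-(r * u))) atTop (𝓝 0) :=
      hN.comp (tendsto_id.const_mul_atTop (by linarith))
    simpa using (((hNr.div_const r).sub ((tendsto_exp_neg_mul_sq_div_two ha).mul hN)).const_mul
      c).div_const a
  rw [lintegral_Ioi_ofReal_of_hasDerivAt_of_nonneg hderiv
    (fun u (hu : 0 < u) => mul_nonneg (mul_nonneg (exp_pos _).le (normalCDF_nonneg _))
      (by positivity)) hlim]
  simp only [G, mul_zero, neg_zero, normalCDF_zero]
  norm_num
  congr 1
  have : r - 1 ≠ 0 := by linarith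
  field_simp
  ring

theorem lintegral_exp_mul_normalCDF_neg_sq_Ioi :
    ∫⁻ u in Ioi 0, ENNReal.ofReal (exp (u ^ 2 / 2) * normalCDF (-u) ^ 2) =
      ENNReal.ofReal ((√(2 * π))⁻¹ / 2 * log 2) := by
  have hw : Continuous fun u => exp (u ^ 2 / 2) * normalCDF (-u) := by
    have := continuous_normalCDF
    fun_prop
  calc _ = ∫⁻ u in Ioi 0, ENNReal.ofReal (exp (u ^ 2 / 2) * normalCDF (-u) * normalCDF (-u)) := by
        simp_rw [sq, mul_assoc]
    _ = ∫⁻ r in Ioi 1, ∫⁻ u in Ioi 0, ENNReal.ofReal (exp (u ^ 2 / 2) * normalCDF (-u) *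
          ((√(2 * π))⁻¹ * u * exp (-(r ^ 2 * u ^ 2) / 2))) :=
        lintegral_Ioi_mul_normalCDF_neg hw fun u => mul_nonneg (exp_pos _).le (normalCDF_nonneg _)
    _ = ∫⁻ r in Ioi 1, ENNReal.ofReal ((√(2 * π))⁻¹ / 2 / (r * (r + 1))) :=
        setLIntegral_congr_fun measurableSet_Ioi fun _ hr =>
          lintegral_Ioi_exp_mul_normalCDF_neg_mul hr
    _ = _ := lintegral_Ioi_one_ofReal_div_mul_add_one (by positivity)

theorem integral_Iplus :
    ∫ u in Set.Ioi (0 : ℝ), normalCDF (-u) * (1 - Real.exp (u ^ 2 / 2) * normalCDF (-u))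
      = (1 - (1 / 2) * Real.log 2) / Real.sqrt (2 * Real.pi) := by
  have hN : Continuous fun u => normalCDF (-u) := continuous_normalCDF.comp continuous_neg
  obtain ⟨hint₁, hI₁⟩ := integrable_and_integral_eq_of_lintegral_ofReal_eq
    hN.aestronglyMeasurable (ae_of_all _ fun u => normalCDF_nonneg _) (by positivity)
    lintegral_normalCDF_neg_Ioi
  obtain ⟨hint₂, hI₂⟩ := integrable_and_integral_eq_of_lintegral_ofReal_eq
    (by fun_prop : Continuous fun u => exp (u ^ 2 / 2) * normalCDF (-u) ^ 2).aestronglyMeasurable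
    (ae_of_all _ fun u => mul_nonneg (exp_pos _).le (sq_nonneg _)) (by positivity)
    lintegral_exp_mul_normalCDF_neg_sq_Ioi
  calc _ = (∫ u in Ioi 0, normalCDF (-u)) - ∫ u in Ioi 0, exp (u ^ 2 / 2) * normalCDF (-u) ^ 2 := by
        rw [← integral_sub hint₁ hint₂]
        congr 1 with u
        ring
    _ = _ := by
        rw [hI₁, hI₂]
        ring
end

section
/- For every real s > 0 and every integer i ≥ 0, Σ_{j=0}^i Π_j(s) = s ϖ_i(s) − (s − i − 1) Π_i(s). In particular, for every positive integer s, Σ_{j=0}^{s−1} Π_j(s) = s ϖ_{s−1}(s) = s ϖ_s(s). -/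
open Real

/-- Poisson(κ) probability mass function. -/
noncomputable def poissonPMF (κ : ℝ) (i : ℕ) : ℝ :=
  Real.exp (-κ) * κ ^ i / (Nat.factorial i)

/-- Poisson(κ) cumulative distribution function. -/
noncomputable def poissonCDF (κ : ℝ) (i : ℕ) : ℝ :=
  ∑ j ∈ Finset.range (i + 1), poissonPMF κ j

/-!
By the recurrence `(i + 1) ϖ_{i+1} = s ϖ_i`, the right-hand side increases by exactly `Π_{i+1}`
when `i` is replaced by `i + 1`, as the left-hand side does. At `i = s - 1` the coefficient of
`Π_i` vanishes, and the same recurrence gives `ϖ_{s-1} = ϖ_s`.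
-/

theorem succ_mul_poissonPMF_succ (s : ℝ) (i : ℕ) :
    (i + 1) * poissonPMF s (i + 1) = s * poissonPMF s i := by
  have hfact : (i.factorial : ℝ) ≠ 0 := by positivity
  simp only [poissonPMF, Nat.factorial_succ, Nat.cast_mul, Nat.cast_succ, pow_succ]
  field_simp

theorem poissonCDF_succ (s : ℝ) (i : ℕ) :
    poissonCDF s (i + 1) = poissonCDF s i + poissonPMF s (i + 1) :=
  Finset.sum_range_succ _ _

theorem sum_range_succ_poissonCDF (s : ℝ) (i : ℕ) :
    ∑ j ∈ Finset.range (i + 1), poissonCDF s j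
      = s * poissonPMF s i - (s - i - 1) * poissonCDF s i := by
  induction i with
  | zero =>
    simp only [poissonCDF, zero_add, Finset.range_one, Finset.sum_singleton, Nat.cast_zero]
    ring
  | succ n ih =>
    rw [Finset.sum_range_succ, ih, poissonCDF_succ]
    push_cast
    linear_combination -succ_mul_poissonPMF_succ s n

theorem sum_range_poissonCDF_natCast_succ (n : ℕ) :
    ∑ j ∈ Finset.range (n + 1), poissonCDF (n + 1) j = (n + 1) * poissonPMF (n + 1) n := by
  rw [sum_range_succ_poissonCDF]
  ring

theorem poisson_cdf_partial_sums :
    (∀ (s : ℝ), 0 < s → ∀ i : ℕ,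
      ∑ j ∈ Finset.range (i + 1), poissonCDF s j
        = s * poissonPMF s i - (s - i - 1) * poissonCDF s i) ∧
    (∀ s : ℕ, 0 < s →
      (∑ j ∈ Finset.range s, poissonCDF s j = s * poissonPMF s (s - 1) ∧
        (s : ℝ) * poissonPMF s (s - 1) = s * poissonPMF s s)) := by
  refine ⟨fun s _ i => sum_range_succ_poissonCDF s i, fun s hs => ?_⟩
  obtain ⟨n, rfl⟩ := Nat.exists_eq_add_one_of_ne_zero hs.ne'
  simp only [Nat.add_sub_cancel, Nat.cast_succ]
  exact ⟨sum_range_poissonCDF_natCast_succ n, (succ_mul_poissonPMF_succ _ n).symm⟩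
end

section
/- For every real x, √(2π) e^{x²/2} Φ(−x) = ∫_0^∞ e^{−w²/2 − wx} dw; consequently, the function x ↦ e^{x²/2} Φ(−x) is strictly decreasing on ℝ. -/
/-!
Completing the square, `e^{-w²/2 - wx} = e^{x²/2} e^{-(w+x)²/2}`, so the shift `v = w + x` turns
the Gaussian tail `√(2π) Φ(-x) = ∫_x^∞ e^{-v²/2} dv` into the stated integral. For each `w > 0`
the integrand is strictly decreasing in `x`, hence so is the integral.
-/

open Real

open MeasureTheory Set

theorem integral_comp_add_right_Ioi {E : Type*} [NormedAddCommGroup E] [NormedSpace ℝ E]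
    (f : ℝ → E) (a c : ℝ) : ∫ x in Ioi c, f (x + a) = ∫ x in Ioi (c + a), f x := by
  have h := (measurePreserving_add_right volume a).setIntegral_preimage_emb
    (measurableEmbedding_addRight a) f (Ioi (c + a))
  rwa [preimage_add_const_Ioi, add_sub_cancel_right] at h

theorem setIntegral_lt_setIntegral_of_lt {X : Type*} [MeasurableSpace X] {μ : Measure X}
    {s : Set X} {f g : X → ℝ} (hs : MeasurableSet s) (hμs : μ s ≠ 0)
    (hf : IntegrableOn f s μ) (hg : IntegrableOn g s μ) (hlt : ∀ x ∈ s, f x < g x) :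
    ∫ x in s, f x ∂μ < ∫ x in s, g x ∂μ := by
  have hnonneg : 0 ≤ᵐ[μ.restrict s] g - f :=
    (ae_restrict_iff' hs).2 (.of_forall fun x hx ↦ sub_nonneg.2 (hlt x hx).le)
  have hsupp : s ⊆ Function.support (g - f) := fun x hx ↦ (sub_pos.2 (hlt x hx)).ne'
  rw [← sub_pos, ← integral_sub hg hf]
  refine (setIntegral_pos_iff_support_of_nonneg_ae hnonneg (hg.sub hf)).2 ?_
  rwa [inter_eq_right.2 hsupp, pos_iff_ne_zero]

theorem exp_neg_sq_div_two_sub_mul (w x : ℝ) :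
    exp (-w ^ 2 / 2 - w * x) = exp (x ^ 2 / 2) * exp (-(w + x) ^ 2 / 2) := by
  rw [← exp_add]; ring_nf

theorem integrable_exp_neg_sq_div_two_sub_mul (x : ℝ) :
    Integrable fun w : ℝ ↦ exp (-w ^ 2 / 2 - w * x) := by
  have h := ((integrable_exp_neg_mul_sq (b := 2⁻¹) (by norm_num)).comp_add_right x).const_mul
    (exp (x ^ 2 / 2))
  refine h.congr (.of_forall fun w ↦ ?_)
  simp only [exp_neg_sq_div_two_sub_mul]
  ring_nf

theorem sqrt_two_pi_mul_exp_mul_normalCDF_neg (x : ℝ) :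
    √(2 * π) * exp (x ^ 2 / 2) * normalCDF (-x) =
      ∫ w in Ioi (0 : ℝ), exp (-w ^ 2 / 2 - w * x) := by
  have h2π : √(2 * π) ≠ 0 := by positivity
  have htail : ∫ v in Iic (-x), exp (-v ^ 2 / 2) = ∫ w in Ioi (0 : ℝ), exp (-(w + x) ^ 2 / 2) := by
    rw [integral_comp_add_right_Ioi (fun v ↦ exp (-v ^ 2 / 2)), zero_add,
      ← integral_comp_neg_Ioi]
    simp only [even_two, Even.neg_pow]
  simp_rw [normalCDF, exp_neg_sq_div_two_sub_mul, integral_const_mul, htail]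
  field_simp

theorem strictAnti_integral_Ioi_exp_neg_sq_div_two_sub_mul :
    StrictAnti fun x : ℝ ↦ ∫ w in Ioi (0 : ℝ), exp (-w ^ 2 / 2 - w * x) := by
  intro x y hxy
  refine setIntegral_lt_setIntegral_of_lt measurableSet_Ioi (by simp)
    (integrable_exp_neg_sq_div_two_sub_mul y).integrableOn
    (integrable_exp_neg_sq_div_two_sub_mul x).integrableOn fun w (hw : 0 < w) ↦ ?_
  gcongr

theorem mills_ratio_representation_and_monotone :
    (∀ x : ℝ, Real.sqrt (2 * Real.pi) * Real.exp (x ^ 2 / 2) * normalCDF (-x)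
        = ∫ w in Set.Ioi (0 : ℝ), Real.exp (-w ^ 2 / 2 - w * x)) ∧
    StrictAnti (fun x : ℝ => Real.exp (x ^ 2 / 2) * normalCDF (-x)) := by
  refine ⟨sqrt_two_pi_mul_exp_mul_normalCDF_neg, ?_⟩
  have h2π : 0 < √(2 * π) := by positivity
  have hrepr : (fun x : ℝ ↦ exp (x ^ 2 / 2) * normalCDF (-x)) =
      fun x ↦ (√(2 * π))⁻¹ * ∫ w in Ioi (0 : ℝ), exp (-w ^ 2 / 2 - w * x) := by
    ext x
    rw [← sqrt_two_pi_mul_exp_mul_normalCDF_neg, mul_assoc, inv_mul_cancel_left₀ h2π.ne']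
  rw [hrepr]
  exact strictAnti_integral_Ioi_exp_neg_sq_div_two_sub_mul.const_mul (inv_pos.2 h2π)
end
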